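/- arXiv:math/0208131 — 2 statements merged into one kernel-verified Lean document; each statement's English description precedes it below -/
import Mathlib

section
/- If A is an m×n real matrix of rank m (with m < n), b ∈ ℝᵐ, then there exists an index set J ⊆ {1,…,n} of size n − m such that R_J = C. In other words, m of the n bilinear constraints w_j = x_j·y defining C can be replaced by the linear system Aw − by = 0. -/
open Matrix

theorem stmt1 (n m : ℕ) (hmn : m < n) (A : Matrix (Fin m) (Fin n) ℝ)
    (hrank : A.rank = m) (b : Fin m → ℝ) :
    ∃ J : Finset (Fin n), J.card = n - m ∧
      {p : (Fin n → ℝ) × (Fin n → ℝ) × ℝ |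
        A.mulVec p.1 = b ∧ A.mulVec p.2.1 - p.2.2 • b = 0 ∧
        ∀ j ∈ J, p.2.1 j = p.1 j * p.2.2} =
      {p : (Fin n → ℝ) × (Fin n → ℝ) × ℝ |
        A.mulVec p.1 = b ∧ ∀ j : Fin n, p.2.1 j = p.1 j * p.2.2} := by
  classical
  -- the columns of `A` span `ℝ^m`
  have hspan : Submodule.span ℝ (Set.range Aᵀ) = ⊤ := by
    apply Submodule.eq_top_of_finrank_eq
    rw [show Set.range Aᵀ = Set.range A.col from rfl, ← Matrix.rank_eq_finrank_span_cols, hrank, Module.finrank_pi, Fintype.card_fin]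
  -- extract a linearly independent spanning subset of the columns
  obtain ⟨B, hB1, hB2, hB3⟩ := exists_linearIndependent ℝ (Set.range Aᵀ)
  rw [hspan] at hB2
  have hBfin : B.Finite := hB3.setFinite
  haveI := hBfin.fintype
  have bas : Module.Basis B ℝ (Fin m → ℝ) := Module.Basis.mk hB3 (by
    rw [Subtype.range_coe, hB2])
  have hcard : Fintype.card B = m := by
    have := Module.finrank_eq_card_basis bas
    rw [Module.finrank_pi, Fintype.card_fin] at this
    omega
  -- choose column indices realizing the independent set
  have hchoice : ∀ v : B, ∃ j : Fin n, Aᵀ j = (v : Fin m → ℝ) := fun v => hB1 v.2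
  choose f hf using hchoice
  have hfinj : Function.Injective f := by
    intro v1 v2 h
    have : (v1 : Fin m → ℝ) = v2 := by rw [← hf v1, ← hf v2, h]
    exact Subtype.ext this
  set S : Finset (Fin n) := Finset.univ.image f with hS
  have hScard : S.card = m := by
    rw [hS, Finset.card_image_of_injective _ hfinj, Finset.card_univ, hcard]
  -- key: a vector supported on `S` in the kernel of `A` is zero
  have key : ∀ v : Fin n → ℝ, A.mulVec v = 0 → (∀ j ∉ S, v j = 0) → v = 0 := by
    intro v hv hsupp
    have hmv : A.mulVec v = ∑ j, v j • Aᵀ j := by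
      funext k
      simp [Matrix.mulVec, dotProduct, Finset.sum_apply, Matrix.transpose_apply,
        mul_comm]
    have hsum : ∑ j ∈ S, v j • Aᵀ j = 0 := by
      rw [← hv, hmv]
      apply Finset.sum_subset (Finset.subset_univ S)
      intro j _ hj
      rw [hsupp j hj, zero_smul]
    have hsum2 : ∑ u : B, v (f u) • (u : Fin m → ℝ) = 0 := by
      rw [← hsum, hS, Finset.sum_image (fun a _ b _ h => hfinj h)]
      simp [hf]
    have hz := Fintype.linearIndependent_iff.mp hB3 (fun u => v (f u)) hsum2
    funext j
    by_cases hj : j ∈ S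
    · rw [hS, Finset.mem_image] at hj
      obtain ⟨u, -, rfl⟩ := hj
      simpa using hz u
    · simpa using hsupp j hj
  refine ⟨Sᶜ, ?_, ?_⟩
  · rw [Finset.card_compl, hScard, Fintype.card_fin]
  · ext ⟨x, w, y⟩
    simp only [Set.mem_setOf_eq]
    constructor
    · rintro ⟨h1, h2, h3⟩
      refine ⟨h1, fun j => ?_⟩
      have hAw : A.mulVec w = y • b := by
        have := sub_eq_zero.mp h2
        exact this
      have hv0 : A.mulVec (w - y • x) = 0 := by
        rw [Matrix.mulVec_sub, Matrix.mulVec_smul, h1, hAw, sub_self]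
      have hsupp : ∀ j ∉ S, (w - y • x) j = 0 := by
        intro j hj
        have := h3 j (Finset.mem_compl.mpr hj)
        simp [this, mul_comm]
      have := key _ hv0 hsupp
      have hj := congrFun this j
      simp only [Pi.sub_apply, Pi.smul_apply, smul_eq_mul, Pi.zero_apply, sub_eq_zero] at hj
      rw [hj, mul_comm]
    · rintro ⟨h1, h2⟩
      refine ⟨h1, ?_, fun j _ => h2 j⟩
      have hw : w = y • x := funext fun j => by
        rw [h2 j]; simp [mul_comm]
      rw [hw, Matrix.mulVec_smul, h1, sub_self]
end

section
/- Let A be an m×n real matrix of rank m, m < n, and let S ⊆ {1,…,n} with |S| = m be such that the columns of A indexed by S are linearly independent. Set J = {1,…,n}\S, so |J| = n − m. Then the map sending (x,w,y) ∈ R_J to (x, y) is injective on R_J: the vector w is uniquely determined by x and y, namely w = y·x. -/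
theorem stmt6 (n m : ℕ) (hmn : m < n) (A : Matrix (Fin m) (Fin n) ℝ)
    (hrank : A.rank = m) (b : Fin m → ℝ) (S : Finset (Fin n)) (hS : S.card = m)
    (hcols : LinearIndependent ℝ (fun j : {j : Fin n // j ∈ S} => A.transpose j.1))
    (J : Finset (Fin n)) (hJ : J = Sᶜ) :
    ∀ x w : Fin n → ℝ, ∀ y : ℝ,
      (A.mulVec x = b ∧ A.mulVec w - y • b = 0 ∧ ∀ j ∈ J, w j = x j * y) →
      w = y • x := by
  rintro x w y ⟨h1, h2, h3⟩
  set d : Fin n → ℝ := w - y • x with hd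
  have hdJ : ∀ j ∉ S, d j = 0 := by
    intro j hj
    have hjJ : j ∈ J := by rw [hJ, Finset.mem_compl]; exact hj
    have := h3 j hjJ
    simp [hd, this, mul_comm]
  have hAw : A.mulVec w = y • b := by
    have := sub_eq_zero.mp h2
    exact this
  have hAd : A.mulVec d = 0 := by
    rw [hd, Matrix.mulVec_sub, Matrix.mulVec_smul, h1, hAw, sub_self]
  have hsum : ∑ j : {j : Fin n // j ∈ S}, d j.1 • A.transpose j.1 = 0 := by
    funext i
    have : (A.mulVec d) i = 0 := by rw [hAd]; rfl
    rw [Matrix.mulVec, dotProduct] at this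
    have hall : ∑ j : Fin n, A i j * d j = ∑ j ∈ S, A i j * d j := by
      apply (Finset.sum_subset (Finset.subset_univ S) _).symm
      intro j _ hj
      rw [hdJ j hj, mul_zero]
    have hsub : ∑ j : {j : Fin n // j ∈ S}, A i j.1 * d j.1 = ∑ j ∈ S, A i j * d j :=
      Finset.sum_coe_sort S (fun j => A i j * d j)
    simp only [Finset.sum_apply, Pi.smul_apply, Pi.zero_apply, smul_eq_mul,
      Matrix.transpose_apply]
    rw [hall, ← hsub] at this
    rw [← this]
    exact Finset.sum_congr rfl (fun j _ => mul_comm _ _)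
  have hdS : ∀ j : {j : Fin n // j ∈ S}, d j.1 = 0 :=
    Fintype.linearIndependent_iff.mp hcols (fun j => d j.1) hsum
  have hd0 : d = 0 := by
    funext j
    by_cases hj : j ∈ S
    · exact hdS ⟨j, hj⟩
    · exact hdJ j hj
  have : w - y • x = 0 := hd0
  exact sub_eq_zero.mp this
end
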